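/- arXiv:1008.5063 — 4 statements merged into one kernel-verified Lean document; each statement's English description precedes it below -/
import Mathlib

section
/- Let k ≥ 1 be an integer and let q_1, …, q_k be complex numbers with |q_j| < 1 for all j. Then the sum of q_1^{i_1} q_2^{i_2} ⋯ q_k^{i_k} over all tuples (i_1,…,i_k) of pairwise distinct nonnegative integers (i.e., over all injective functions from {1,…,k} to the nonnegative integers) converges absolutely and equals Σ_{σ ∈ S_k} (q_{σ(1)}^{k-1} q_{σ(2)}^{k-2} ⋯ q_{σ(k-1)}^{1}) / ((1 − q_{σ(1)})(1 − q_{σ(1)} q_{σ(2)}) ⋯ (1 − q_{σ(1)} q_{σ(2)} ⋯ q_{σ(k)})), where S_k is the symmetric group on {1,…,k}. (Each denominator factor is nonzero since the moduli of the products q_{σ(1)}⋯q_{σ(j)} are < 1.) -/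
/-! Auxiliary definitions and lemmas -/

/-- Tail sum: sum of `a l` over `l : Fin k` with `n ≤ l`. -/
def tailSum {k : ℕ} (a : Fin k → ℕ) (n : ℕ) : ℕ :=
  ∑ l ∈ Finset.univ.filter (fun l : Fin k => n ≤ (l : ℕ)), a l

lemma tailSum_eq_zero {k : ℕ} (a : Fin k → ℕ) {n : ℕ} (h : k ≤ n) : tailSum a n = 0 := by
  unfold tailSum
  rw [Finset.filter_false_of_mem, Finset.sum_empty]
  intro l _
  have := l.isLt
  omega

lemma tailSum_succ {k : ℕ} (a : Fin k → ℕ) {n : ℕ} (h : n < k) :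
    tailSum a n = a ⟨n, h⟩ + tailSum a (n + 1) := by
  unfold tailSum
  have hsplit : Finset.univ.filter (fun l : Fin k => n ≤ (l : ℕ)) =
      insert ⟨n, h⟩ (Finset.univ.filter (fun l : Fin k => n + 1 ≤ (l : ℕ))) := by
    ext l
    simp only [Finset.mem_filter, Finset.mem_univ, true_and, Finset.mem_insert, Fin.ext_iff]
    omega
  rw [hsplit, Finset.sum_insert (by simp)]

lemma tailSum_anti {k : ℕ} (a : Fin k → ℕ) {n₁ n₂ : ℕ} (h : n₁ ≤ n₂) :
    tailSum a n₂ ≤ tailSum a n₁ := by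
  apply Finset.sum_le_sum_of_subset
  intro l
  simp only [Finset.mem_filter, Finset.mem_univ, true_and]
  omega

/-- The strictly decreasing tuple determined by `a`. -/
def mTuple {k : ℕ} (a : Fin k → ℕ) (j : Fin k) : ℕ :=
  (k - 1 - (j : ℕ)) + tailSum a (j : ℕ)

lemma mTuple_strictAnti {k : ℕ} (a : Fin k → ℕ) : StrictAnti (mTuple a) := by
  intro j₁ j₂ h
  unfold mTuple
  have h2 := j₂.isLt
  have hT : tailSum a (j₂ : ℕ) ≤ tailSum a (j₁ : ℕ) := tailSum_anti a (le_of_lt h)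
  have : (k - 1 - (j₂ : ℕ)) < (k - 1 - (j₁ : ℕ)) := by
    have : (j₁ : ℕ) < (j₂ : ℕ) := h
    omega
  omega

/-- The parameterization of injective tuples by a permutation and free parameters. -/
def eFun {k : ℕ} (σ : Equiv.Perm (Fin k)) (a : Fin k → ℕ) : Fin k → ℕ :=
  fun x => mTuple a (σ.symm x)

lemma eFun_injective {k : ℕ} (σ : Equiv.Perm (Fin k)) (a : Fin k → ℕ) :
    Function.Injective (eFun σ a) :=
  ((mTuple_strictAnti a).injective).comp σ.symm.injective

lemma strictMono_fin_id {n : ℕ} {f : Fin n → Fin n} (hf : StrictMono f) : ∀ x, f x = x := by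
  have hb : Function.Bijective f := (Finite.injective_iff_bijective).mp hf.injective
  have he : StrictMono.orderIsoOfSurjective f hf hb.2 = OrderIso.refl _ := Subsingleton.elim _ _
  intro x
  have := congrArg (fun (e : Fin n ≃o Fin n) => e x) he
  simpa using this

lemma eFun_inj2 {k : ℕ} : Function.Injective
    (fun p : Equiv.Perm (Fin k) × (Fin k → ℕ) => eFun p.1 p.2) := by
  rintro ⟨σ, a⟩ ⟨σ', a'⟩ h
  simp only at h
  have hm : ∀ j : Fin k, mTuple a j = mTuple a' (σ'.symm (σ j)) := by
    intro j
    have := congrFun h (σ j)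
    simpa [eFun] using this
  have hg : StrictMono (fun j => σ'.symm (σ j)) := by
    intro j₁ j₂ hlt
    have h1 : mTuple a j₂ < mTuple a j₁ := mTuple_strictAnti a hlt
    rw [hm j₁, hm j₂] at h1
    exact ((mTuple_strictAnti a').lt_iff_gt).mp h1
  have hid : ∀ j, σ'.symm (σ j) = j := strictMono_fin_id hg
  have hσ : σ = σ' := Equiv.ext fun j => by
    have := congrArg σ' (hid j)
    rwa [σ'.apply_symm_apply] at this
  subst hσ
  have hm' : ∀ j : Fin k, mTuple a j = mTuple a' j := by
    intro j; rw [hm j, σ.symm_apply_apply]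
  have hT : ∀ n, tailSum a n = tailSum a' n := by
    intro n
    rcases lt_or_ge n k with hn | hn
    · have := hm' ⟨n, hn⟩
      unfold mTuple at this
      simpa using this
    · rw [tailSum_eq_zero a hn, tailSum_eq_zero a' hn]
  have ha : a = a' := by
    funext j
    have h1 := tailSum_succ a j.isLt
    have h2 := tailSum_succ a' j.isLt
    have h3 := hT (j : ℕ)
    have h4 := hT ((j : ℕ) + 1)
    simp only [Fin.eta] at h1 h2
    omega
  rw [ha]

lemma eFun_surj2 {k : ℕ} (i : Fin k → ℕ) (hi : Function.Injective i) :
    ∃ p : Equiv.Perm (Fin k) × (Fin k → ℕ), eFun p.1 p.2 = i := by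
  classical
  set σ : Equiv.Perm (Fin k) := (Fin.revPerm).trans (Tuple.sort i) with hσdef
  set m : Fin k → ℕ := fun j => i (σ j) with hmdef
  have hsm : StrictMono (i ∘ Tuple.sort i) :=
    (Tuple.monotone_sort i).strictMono_of_injective (hi.comp (Tuple.sort i).injective)
  have hms : StrictAnti m := by
    intro j₁ j₂ h
    exact hsm (Fin.rev_lt_rev.mpr h)
  have hmstep : ∀ n (h : n + 1 < k), m ⟨n + 1, h⟩ < m ⟨n, by omega⟩ := by
    intro n h
    exact hms (by simp [Fin.lt_def])
  have hmlb : ∀ n (h : n < k), k - 1 - n ≤ m ⟨n, h⟩ := by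
    have key : ∀ d n (h : n < k), k - 1 - n ≤ d → k - 1 - n ≤ m ⟨n, h⟩ := by
      intro d
      induction d with
      | zero => intro n h hle; omega
      | succ d ihd =>
          intro n h hle
          by_cases hc : n + 1 < k
          · have h1 := ihd (n + 1) hc (by omega)
            have h2 := hmstep n hc
            omega
          · omega
    intro n h
    exact key (k - 1 - n) n h le_rfl
  set g : ℕ → ℕ := fun n => if h : n < k then m ⟨n, h⟩ - (k - 1 - n) else 0 with hgdef
  have hg_anti : ∀ n, g (n + 1) ≤ g n := by
    intro n
    by_cases hc : n + 1 < k
    · have h1 := hmstep n hc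
      have h2 := hmlb n (by omega)
      simp only [hgdef, dif_pos hc, dif_pos (show n < k by omega)]
      omega
    · simp only [hgdef, dif_neg hc]
      omega
  set a : Fin k → ℕ := fun j => g (j : ℕ) - g ((j : ℕ) + 1) with hadef
  have hTg : ∀ d n, k ≤ n + d → tailSum a n = g n := by
    intro d
    induction d with
    | zero =>
        intro n h
        rw [tailSum_eq_zero a (by omega)]
        simp only [hgdef, dif_neg (show ¬ n < k by omega)]
    | succ d ihd =>
        intro n h
        by_cases hn : n < k
        · rw [tailSum_succ a hn, ihd (n + 1) (by omega)]
          have ha : a ⟨n, hn⟩ = g n - g (n + 1) := rfl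
          have := hg_anti n
          omega
        · rw [tailSum_eq_zero a (by omega)]
          simp only [hgdef, dif_neg hn]
  refine ⟨⟨σ, a⟩, ?_⟩
  funext x
  show mTuple a (σ.symm x) = i x
  set j := σ.symm x with hj
  have hT : tailSum a (j : ℕ) = g (j : ℕ) := hTg k (j : ℕ) (by omega)
  have hgj : g (j : ℕ) = m j - (k - 1 - (j : ℕ)) := by
    simp only [hgdef, dif_pos j.isLt, Fin.eta]
  have hlb : k - 1 - (j : ℕ) ≤ m j := by
    have := hmlb (j : ℕ) j.isLt
    simpa [Fin.eta] using this
  have : mTuple a j = m j := by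
    unfold mTuple
    rw [hT, hgj]
    omega
  rw [this, hmdef]
  simp only [hj, Equiv.apply_symm_apply]

/-- Equivalence for splitting off the first coordinate of a tuple. -/
def finSplit (n : ℕ) : (Fin (n+1) → ℕ) ≃ ℕ × (Fin n → ℕ) where
  toFun a := (a 0, fun j => a j.succ)
  invFun z := Fin.cons z.1 z.2
  left_inv a := by
    funext j
    induction j using Fin.cases <;> simp
  right_inv z := by simp

lemma pi_tsum_prod {n : ℕ} (g : Fin n → ℕ → ℂ) (hg : ∀ j, Summable fun m => ‖g j m‖) :
    (Summable fun a : Fin n → ℕ => ‖∏ j, g j (a j)‖) ∧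
    (∑' a : Fin n → ℕ, ∏ j, g j (a j)) = ∏ j, ∑' m, g j m := by
  induction n with
  | zero =>
      constructor
      · exact Summable.of_finite
      · simp [tsum_eq_single (fun (j : Fin 0) => 0)
          (by intro b hb; exact absurd (funext fun j => j.elim0) hb)]
  | succ n ih =>
      set G : Fin n → ℕ → ℂ := fun j m => g j.succ m with hG
      obtain ⟨ihs, ihe⟩ := ih G (fun j => hg j.succ)
      have h0 : Summable fun m => ‖g 0 m‖ := hg 0
      have hsp : ∀ a : Fin (n+1) → ℕ,
          ∏ j, g j (a j) = g 0 (a 0) * ∏ j : Fin n, G j (a j.succ) := by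
        intro a; exact Fin.prod_univ_succ _
      have hprod : Summable fun z : ℕ × (Fin n → ℕ) => ‖g 0 z.1 * ∏ j, G j (z.2 j)‖ := by
        have : Summable fun z : ℕ × (Fin n → ℕ) => ‖g 0 z.1‖ * ‖∏ j, G j (z.2 j)‖ := by
          refine summable_mul_of_summable_norm (f := fun m => ‖g 0 m‖)
            (g := fun a : Fin n → ℕ => ‖∏ j, G j (a j)‖) ?_ ?_
          · simpa using h0
          · simpa using ihs
        exact this.congr fun z => (norm_mul _ _).symm
      constructor
      · have := ((finSplit n).summable_iff
          (f := fun z : ℕ × (Fin n → ℕ) => ‖g 0 z.1 * ∏ j, G j (z.2 j)‖)).mpr hprod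
        refine this.congr fun a => ?_
        show ‖g 0 (a 0) * ∏ j : Fin n, G j (a j.succ)‖ = _
        rw [← hsp a]
      · have h1 : (∑' a : Fin (n+1) → ℕ, ∏ j, g j (a j))
            = ∑' z : ℕ × (Fin n → ℕ), g 0 z.1 * ∏ j, G j (z.2 j) := by
          rw [← (finSplit n).tsum_eq]
          exact tsum_congr fun a => hsp a
        have h2 := tsum_mul_tsum_of_summable_norm (f := g 0)
          (g := fun a : Fin n → ℕ => ∏ j, G j (a j)) (by simpa using h0) (by simpa using ihs)
        rw [h1, ← h2, ihe, Fin.prod_univ_succ]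

lemma norm_prod_lt_one {ι : Type*} (s : Finset ι) (hs : s.Nonempty) (f : ι → ℂ)
    (hf : ∀ i, ‖f i‖ < 1) : ‖∏ i ∈ s, f i‖ < 1 := by
  induction hs using Finset.Nonempty.cons_induction with
  | singleton a => simpa using hf a
  | cons a s ha hs ih =>
      rw [Finset.prod_cons, norm_mul]
      have h1 := hf a
      have h2 := norm_nonneg (f a)
      have h3 := norm_nonneg (∏ i ∈ s, f i)
      nlinarith

lemma key_prod_eq {k : ℕ} (q : Fin k → ℂ) (σ : Equiv.Perm (Fin k)) (a : Fin k → ℕ) :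
    (∏ j : Fin k, q j ^ (eFun σ a j)) =
      (∏ j : Fin k, q (σ j) ^ (k - 1 - (j : ℕ))) *
        ∏ l : Fin k, (∏ j ∈ Finset.Iic l, q (σ j)) ^ (a l) := by
  have h0 : (∏ j : Fin k, q j ^ (eFun σ a j))
      = ∏ j : Fin k, q (σ j) ^ (mTuple a j) := by
    rw [← Equiv.prod_comp σ (fun x => q x ^ (eFun σ a x))]
    refine Finset.prod_congr rfl fun j _ => ?_
    unfold eFun
    rw [σ.symm_apply_apply]
  rw [h0]
  have h1 : ∀ j : Fin k, q (σ j) ^ (mTuple a j) =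
      q (σ j) ^ (k - 1 - (j : ℕ)) * q (σ j) ^ (tailSum a (j : ℕ)) := by
    intro j
    unfold mTuple
    rw [pow_add]
  rw [Finset.prod_congr rfl fun j _ => h1 j, Finset.prod_mul_distrib]
  congr 1
  have hIci : ∀ j : Fin k, Finset.univ.filter (fun l : Fin k => (j : ℕ) ≤ (l : ℕ))
      = Finset.Ici j := by
    intro j; ext l
    simp only [Finset.mem_filter, Finset.mem_univ, true_and, Finset.mem_Ici]
    exact (Fin.le_def).symm
  calc ∏ j : Fin k, q (σ j) ^ (tailSum a (j : ℕ))
      = ∏ j : Fin k, ∏ l ∈ Finset.Ici j, q (σ j) ^ (a l) := by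
        refine Finset.prod_congr rfl fun j _ => ?_
        unfold tailSum
        rw [hIci j, Finset.prod_pow_eq_pow_sum]
    _ = ∏ l : Fin k, ∏ j ∈ Finset.Iic l, q (σ j) ^ (a l) := by
        refine Finset.prod_comm' fun j l => ?_
        simp [Finset.mem_Ici, Finset.mem_Iic]
    _ = ∏ l : Fin k, (∏ j ∈ Finset.Iic l, q (σ j)) ^ (a l) := by
        refine Finset.prod_congr rfl fun l _ => ?_
        rw [Finset.prod_pow]

/-- For `k ≥ 1` and complex numbers `q 0, …, q (k-1)` of modulus `< 1`,
the sum of `q 0 ^ i 0 * ⋯ * q (k-1) ^ i (k-1)` over all injective tuples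
`i : Fin k → ℕ` (tuples of pairwise distinct nonnegative integers) converges absolutely
(is summable) and equals the sum over all permutations `σ` of `{0, …, k-1}` of
`(q (σ 0) ^ (k-1) * q (σ 1) ^ (k-2) * ⋯ * q (σ (k-2)) ^ 1) /
((1 - q (σ 0)) * (1 - q (σ 0) * q (σ 1)) * ⋯ * (1 - q (σ 0) * ⋯ * q (σ (k-1))))`. -/
theorem Rk_eq_sum_over_permutations (k : ℕ) (hk : 1 ≤ k) (q : Fin k → ℂ)
    (hq : ∀ j, ‖q j‖ < 1) :
    Summable (fun i : {i : Fin k → ℕ // Function.Injective i} => ∏ j : Fin k, q j ^ i.1 j) ∧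
    (∑' i : {i : Fin k → ℕ // Function.Injective i}, ∏ j : Fin k, q j ^ i.1 j) =
      ∑ σ : Equiv.Perm (Fin k),
        (∏ j : Fin k, q (σ j) ^ (k - 1 - (j : ℕ))) /
          ∏ j : Fin k, (1 - ∏ l ∈ Finset.Iic j, q (σ l)) := by
  classical
  set f : {i : Fin k → ℕ // Function.Injective i} → ℂ := fun i => ∏ j : Fin k, q j ^ i.1 j
    with hfdef
  have hbij : Function.Bijective (fun p : Equiv.Perm (Fin k) × (Fin k → ℕ) =>
      (⟨eFun p.1 p.2, eFun_injective p.1 p.2⟩ : {i : Fin k → ℕ // Function.Injective i})) := by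
    constructor
    · intro p p' h
      exact eFun_inj2 (congrArg Subtype.val h)
    · rintro ⟨i, hi⟩
      obtain ⟨p, hp⟩ := eFun_surj2 i hi
      exact ⟨p, Subtype.ext hp⟩
  set E := Equiv.ofBijective _ hbij with hEdef
  set P : Equiv.Perm (Fin k) → Fin k → ℂ := fun σ l => ∏ j ∈ Finset.Iic l, q (σ j) with hPdef
  have hq' : ∀ j, ‖q j‖ < 1 := fun j => by exact hq j
  have hP : ∀ σ l, ‖P σ l‖ < 1 := fun σ l =>
    norm_prod_lt_one _ ⟨l, Finset.mem_Iic.mpr le_rfl⟩ _ (fun j => hq' (σ j))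
  set C : Equiv.Perm (Fin k) → ℂ := fun σ => ∏ j : Fin k, q (σ j) ^ (k - 1 - (j : ℕ))
    with hCdef
  have hgeom : ∀ σ l, Summable (fun m : ℕ => ‖(P σ l) ^ m‖) := by
    intro σ l
    have := summable_geometric_of_lt_one (norm_nonneg (P σ l)) (hP σ l)
    exact this.congr fun m => (norm_pow _ _).symm
  have hpi : ∀ σ, (Summable fun a : Fin k → ℕ => ‖∏ l, (P σ l) ^ (a l)‖) ∧
      (∑' a : Fin k → ℕ, ∏ l, (P σ l) ^ (a l)) = ∏ l, ∑' m, (P σ l) ^ m :=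
    fun σ => pi_tsum_prod (fun l m => (P σ l) ^ m) (hgeom σ)
  set F : Equiv.Perm (Fin k) × (Fin k → ℕ) → ℂ :=
    fun p => C p.1 * ∏ l, (P p.1 l) ^ (p.2 l) with hFdef
  have hFinner : ∀ σ, Summable fun a : Fin k → ℕ => F (σ, a) := by
    intro σ
    exact ((hpi σ).1.of_norm).mul_left (C σ)
  have hFnorm : Summable fun p => ‖F p‖ := by
    refine (summable_prod_of_nonneg (fun p => norm_nonneg _)).mpr ⟨?_, ?_⟩
    · intro σ
      have := ((hpi σ).1).mul_left ‖C σ‖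
      exact this.congr fun a => (norm_mul _ _).symm
    · exact Summable.of_finite
  have hFsum : Summable F := hFnorm.of_norm
  have hcomp : ∀ p : Equiv.Perm (Fin k) × (Fin k → ℕ), f (E p) = F p := by
    intro p
    show (∏ j : Fin k, q j ^ (eFun p.1 p.2 j)) = F p
    rw [key_prod_eq q p.1 p.2]
  have hsf : Summable f := (E.summable_iff).mp (hFsum.congr fun p => (hcomp p).symm)
  refine ⟨hsf, ?_⟩
  have h1 : (∑' i, f i) = ∑' p : Equiv.Perm (Fin k) × (Fin k → ℕ), F p := by
    rw [← E.tsum_eq]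
    exact tsum_congr hcomp
  have h2 : (∑' p : Equiv.Perm (Fin k) × (Fin k → ℕ), F p)
      = ∑' σ, ∑' a : Fin k → ℕ, F (σ, a) := Summable.tsum_prod' hFsum hFinner
  have h3 : ∀ σ : Equiv.Perm (Fin k),
      (∑' a : Fin k → ℕ, F (σ, a)) = C σ / ∏ l, (1 - P σ l) := by
    intro σ
    show (∑' a : Fin k → ℕ, C σ * ∏ l, (P σ l) ^ (a l)) = _
    rw [tsum_mul_left, (hpi σ).2]
    have hgs : ∀ l : Fin k, (∑' m : ℕ, (P σ l) ^ m) = (1 - P σ l)⁻¹ :=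
      fun l => tsum_geometric_of_norm_lt_one (hP σ l)
    rw [Finset.prod_congr rfl fun l _ => hgs l, Finset.prod_inv_distrib, div_eq_mul_inv]
  rw [h1, h2, tsum_fintype]
  exact Finset.sum_congr rfl fun σ _ => h3 σ
end

section
/- Let F be a field, let n ≥ 1 and k ≥ 0 be integers, and let q ∈ F be such that q^{in} ≠ 1 for all integers i with 1 ≤ i ≤ k. Then Σ_{j=0}^{k} q^{nj} / ((1 − q^n)(1 − q^{2n}) ⋯ (1 − q^{jn})) = 1 / ((1 − q^n)(1 − q^{2n}) ⋯ (1 − q^{kn})), where the empty products (for j = 0) are taken to be 1. -/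
/-- Let `F` be a field, `n ≥ 1`, `k ≥ 0`, and `q ∈ F` with `q^(i*n) ≠ 1`
for all `1 ≤ i ≤ k`. Then
`Σ_{j=0}^{k} q^{nj} / ((1 − q^n)(1 − q^{2n}) ⋯ (1 − q^{jn}))
  = 1 / ((1 − q^n)(1 − q^{2n}) ⋯ (1 − q^{kn}))`,
empty products being `1`. -/
theorem q_identity_for_zeta_functional_equation (F : Type*) [Field F] (n k : ℕ)
    (hn : 1 ≤ n) (q : F) (hq : ∀ i, 1 ≤ i → i ≤ k → q ^ (i * n) ≠ 1) :
    ∑ j ∈ Finset.range (k + 1), q ^ (n * j) / ∏ i ∈ Finset.Icc 1 j, (1 - q ^ (i * n)) =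
      1 / ∏ i ∈ Finset.Icc 1 k, (1 - q ^ (i * n)) := by
  induction k with
  | zero => simp
  | succ k ih =>
    have hPk : (∏ i ∈ Finset.Icc 1 k, (1 - q ^ (i * n))) ≠ 0 := by
      apply Finset.prod_ne_zero_iff.2
      intro i hi
      rw [Finset.mem_Icc] at hi
      exact sub_ne_zero.2 (Ne.symm (hq i hi.1 (hi.2.trans (Nat.le_succ k))))
    have hlast : (1 - q ^ ((k + 1) * n)) ≠ 0 :=
      sub_ne_zero.2 (Ne.symm (hq (k + 1) (Nat.le_add_left 1 k) le_rfl))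
    rw [Finset.sum_range_succ, ih (fun i h1 h2 => hq i h1 (h2.trans (Nat.le_succ k))),
      Finset.prod_Icc_succ_top (Nat.le_add_left 1 k)]
    field_simp
    ring_nf
end

section
/- Let n ≥ 1 and k ≥ 1 be integers. For every integer N ≥ 0, the number of pairs ((k_1,…,k_k), {i_r^{(j)}}), where (k_1,…,k_k) is a tuple of nonnegative integers with Σ_{j=1}^{k} j·k_j = k and {i_r^{(j)}} is an admissible collection for (k_1,…,k_k) satisfying n·Σ_{j=1}^{k} j·(i_1^{(j)} + … + i_{k_j}^{(j)}) = N, is equal to the coefficient of q^N in the formal power series ∏_{j=1}^{k} (1 − q^{jn})^{-1} ∈ ℤ[[q]]. -/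
/-- An *admissible collection* for a tuple `(κ 0, …, κ (s-1))` of nonnegative integers:
a family of nonnegative integers `i_r^{(j)}` (`j < s`, `r < κ j`) which is strictly
increasing in `r` for each fixed `j`, and all of whose members (over all pairs `(j, r)`)
are pairwise distinct. -/
def AdmissibleCollection {s : ℕ} (κ : Fin s → ℕ) : Type :=
  {i : (j : Fin s) → Fin (κ j) → ℕ //
    (∀ j, StrictMono (i j)) ∧
    Function.Injective (fun p : Σ j : Fin s, Fin (κ j) => i p.1 p.2)}

/-- The pairs counted in STATEMENT 8: a tuple `(k_1, …, k_k)` of nonnegative integers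
with `Σ_{j=1}^{k} j·k_j = k` (here `κ j` stands for `k_{j+1}`) together with an
admissible collection `{i_r^{(j)}}` for it, of total weight
`n·Σ_{j=1}^{k} j·(i_1^{(j)} + … + i_{k_j}^{(j)}) = N`. -/
def WeightedPartitionData (n k N : ℕ) : Type :=
  Σ κ : {κ : Fin k → ℕ // ∑ j : Fin k, ((j : ℕ) + 1) * κ j = k},
    {i : AdmissibleCollection κ.1 //
      n * ∑ j : Fin k, ((j : ℕ) + 1) * ∑ r, i.1 j r = N}

open Finset PowerSeries

lemma inv_one_sub_X_pow (m : ℕ) (hm : 1 ≤ m) :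
    PowerSeries.invOfUnit (1 - (PowerSeries.X : PowerSeries ℤ) ^ m) 1
      = PowerSeries.mk (fun i => if m ∣ i then 1 else 0) := by
  set f : PowerSeries ℤ := 1 - X ^ m with hf
  set g : PowerSeries ℤ := PowerSeries.mk (fun i => if m ∣ i then 1 else 0) with hg
  have hc : constantCoeff f = ((1 : ℤˣ) : ℤ) := by
    simp [hf]; omega
  have hfg : f * g = 1 := by
    ext d
    have key : (X : PowerSeries ℤ)^m * g = g * X^m := mul_comm _ _
    rw [hf, sub_mul, one_mul, map_sub, key, PowerSeries.coeff_mul_X_pow', hg]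
    simp only [coeff_mk, PowerSeries.coeff_one]
    by_cases hd : d = 0
    · subst hd
      rw [if_pos (dvd_zero m), if_neg (by omega : ¬ m ≤ 0), if_pos rfl, sub_zero]
    · rw [if_neg hd]
      by_cases hdvd : m ∣ d
      · rw [if_pos hdvd, if_pos (Nat.le_of_dvd (by omega) hdvd),
          if_pos (Nat.dvd_sub hdvd dvd_rfl)]
        ring
      · rw [if_neg hdvd]
        by_cases hmd : m ≤ d
        · have hnd : ¬ m ∣ d - m := fun h => hdvd (by
            have := Nat.dvd_add h (dvd_refl m)
            rwa [Nat.sub_add_cancel hmd] at this)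
          rw [if_pos hmd, if_neg hnd, sub_zero]
        · rw [if_neg hmd, sub_zero]
  have h1 : f * invOfUnit f 1 = 1 := PowerSeries.mul_invOfUnit f 1 hc
  calc invOfUnit f 1 = 1 * invOfUnit f 1 := (one_mul _).symm
    _ = (g * f) * invOfUnit f 1 := by rw [mul_comm g f, hfg]
    _ = g * (f * invOfUnit f 1) := by ring
    _ = g := by rw [h1, mul_one]

lemma coeff_prod_count (n k N : ℕ) (hn : 1 ≤ n) :
    PowerSeries.coeff (R := ℤ) N
        (∏ j ∈ Finset.Icc 1 k,
          PowerSeries.invOfUnit (1 - (PowerSeries.X : PowerSeries ℤ) ^ (j * n)) 1)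
      = (((Finset.Icc 1 k).finsuppAntidiag N).filter
          (fun l => ∀ j ∈ Finset.Icc 1 k, (j * n) ∣ l j)).card := by
  have : ∀ j ∈ Finset.Icc 1 k,
      PowerSeries.invOfUnit (1 - (PowerSeries.X : PowerSeries ℤ) ^ (j * n)) 1
        = PowerSeries.mk (fun i => if (j * n) ∣ i then 1 else 0) := by
    intro j hj
    simp only [Finset.mem_Icc] at hj
    exact inv_one_sub_X_pow (j * n) (Nat.one_le_iff_ne_zero.2
      (Nat.mul_ne_zero (by omega) (by omega)))
  rw [Finset.prod_congr rfl this, PowerSeries.coeff_prod]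
  rw [Finset.sum_congr rfl (fun l _ => by
    rw [Finset.prod_congr rfl (fun i _ => PowerSeries.coeff_mk (l i) _), Finset.prod_boole])]
  rw [Finset.sum_boole]

variable {k : ℕ}

/-- tail sum -/
def Tsum (k : ℕ) (a : Fin k → ℕ) (i : ℕ) : ℕ :=
  ∑ j ∈ Finset.univ.filter (fun j : Fin k => i ≤ (j : ℕ)), a j

lemma Tsum_zero (a : Fin k → ℕ) {i : ℕ} (h : k ≤ i) : Tsum k a i = 0 := by
  unfold Tsum
  rw [Finset.filter_false_of_mem, Finset.sum_empty]
  intro j _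
  have := j.isLt
  omega

lemma Tsum_succ (a : Fin k → ℕ) (i : ℕ) :
    Tsum k a i = (if h : i < k then a ⟨i, h⟩ else 0) + Tsum k a (i + 1) := by
  by_cases h : i < k
  · rw [dif_pos h]
    unfold Tsum
    have hins : Finset.univ.filter (fun j : Fin k => i ≤ (j : ℕ))
        = insert ⟨i, h⟩ (Finset.univ.filter (fun j : Fin k => i + 1 ≤ (j : ℕ))) := by
      ext j
      simp only [Finset.mem_filter, Finset.mem_univ, true_and, Finset.mem_insert, Fin.ext_iff]
      omega
    rw [hins, Finset.sum_insert (by simp)]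
  · rw [dif_neg h, Tsum_zero a (by omega), Tsum_zero a (by omega)]

lemma Tsum_sum (a : Fin k → ℕ) :
    ∑ i : Fin k, Tsum k a (i : ℕ) = ∑ j : Fin k, ((j : ℕ) + 1) * a j := by
  unfold Tsum
  simp_rw [Finset.sum_filter]
  rw [Finset.sum_comm]
  refine Finset.sum_congr rfl fun j _ => ?_
  rw [← Finset.sum_filter]
  have : Finset.univ.filter (fun i : Fin k => (i : ℕ) ≤ (j : ℕ)) = Finset.Iic j := by
    ext i
    simp only [Finset.mem_filter, Finset.mem_univ, true_and, Finset.mem_Iic, Fin.le_def]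
  rw [this, Finset.sum_const, Fin.card_Iic, smul_eq_mul]

def diffFn (k : ℕ) (lam : Fin k → ℕ) : Fin k → ℕ :=
  fun j => lam j - (if h : (j : ℕ) + 1 < k then lam ⟨(j : ℕ) + 1, h⟩ else 0)

lemma Tsum_diffFn {lam : Fin k → ℕ} (hl : Antitone lam) (i : ℕ) :
    Tsum k (diffFn k lam) i = if h : i < k then lam ⟨i, h⟩ else 0 := by
  have key : ∀ d i, k ≤ i + d → Tsum k (diffFn k lam) i = if h : i < k then lam ⟨i, h⟩ else 0 := by
    intro d
    induction d with
    | zero => intro i hi; rw [dif_neg (by omega), Tsum_zero _ (by omega)]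
    | succ d ih =>
      intro i hi
      by_cases h : i < k
      · rw [Tsum_succ, dif_pos h, dif_pos h, ih (i + 1) (by omega), diffFn]
        by_cases h2 : i + 1 < k
        · rw [dif_pos h2]
          have h3 : lam ⟨i + 1, h2⟩ ≤ lam ⟨i, h⟩ := hl (by simp [Fin.le_def])
          simp only [Fin.val_mk] at *
          omega
        · rw [dif_neg h2]
          omega
      · rw [dif_neg h, Tsum_zero _ (by omega)]
  exact key (k + 1) i (by omega)

lemma diffFn_Tsum (a : Fin k → ℕ) (j : Fin k) : diffFn k (fun i : Fin k => Tsum k a i) j = a j := by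
  unfold diffFn
  beta_reduce
  have h1 : Tsum k a (j : ℕ) = a j + Tsum k a ((j : ℕ) + 1) := by
    rw [Tsum_succ, dif_pos j.isLt, Fin.eta]
  by_cases h2 : (j : ℕ) + 1 < k
  · rw [dif_pos h2]
    simp only [Fin.val_mk]
    omega
  · rw [dif_neg h2]
    rw [Tsum_zero a (show k ≤ (j : ℕ) + 1 by omega)] at h1
    omega

def equivPA (n k N : ℕ) :
    {a : Fin k → ℕ // n * ∑ j : Fin k, ((j : ℕ) + 1) * a j = N} ≃
    {lam : Fin k → ℕ // Antitone lam ∧ n * ∑ i, lam i = N} where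
  toFun a := ⟨fun i => Tsum k a.1 (i : ℕ),
    ⟨fun i i' hii' => Finset.sum_le_sum_of_subset (by
        intro j hj
        simp only [Finset.mem_filter, Finset.mem_univ, true_and] at hj ⊢
        exact le_trans hii' hj),
     by rw [Tsum_sum]; exact a.2⟩⟩
  invFun lam := ⟨diffFn k lam.1, by
    have : ∑ j : Fin k, ((j : ℕ) + 1) * diffFn k lam.1 j = ∑ i, lam.1 i := by
      rw [← Tsum_sum]
      refine Finset.sum_congr rfl fun i _ => ?_
      rw [Tsum_diffFn lam.2.1, dif_pos i.isLt, Fin.eta]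
    rw [this]; exact lam.2.2⟩
  left_inv a := by
    ext j
    exact diffFn_Tsum a.1 j
  right_inv lam := by
    ext i
    show Tsum k (diffFn k lam.1) (i : ℕ) = lam.1 i
    rw [Tsum_diffFn lam.2.1, dif_pos i.isLt, Fin.eta]

lemma sum_get' (l : List ℕ) (k : ℕ) (h : k = l.length) :
    ∑ i : Fin k, l.get (Fin.cast h i) = l.sum := by
  subst h
  simp only [Fin.cast_refl, id_eq]
  rw [← List.sum_ofFn, List.ofFn_get]

lemma ofFn_get' (l : List ℕ) (k : ℕ) (h : k = l.length) :
    List.ofFn (fun i : Fin k => l.get (Fin.cast h i)) = l := by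
  subst h
  simp only [Fin.cast_refl, id_eq]
  exact List.ofFn_get l

def equivMP (n k N : ℕ) :
    {M : Multiset ℕ // Multiset.card M = k ∧ n * M.sum = N} ≃
    {lam : Fin k → ℕ // Antitone lam ∧ n * ∑ i, lam i = N} where
  toFun M := by
    refine ⟨fun i => (M.1.sort (· ≥ ·)).get
      (Fin.cast (by rw [Multiset.length_sort, M.2.1]) i), ?_, ?_⟩
    · intro i i' hii'
      rcases eq_or_lt_of_le hii' with rfl | hlt
      · exact le_refl _
      · exact List.pairwise_iff_get.mp (Multiset.pairwise_sort M.1 (· ≥ ·)) _ _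
          (by simp only [Fin.lt_def, Fin.coe_cast]; exact hlt)
    · rw [sum_get' (M.1.sort (· ≥ ·)) k (by rw [Multiset.length_sort, M.2.1]),
        ← Multiset.sum_coe, Multiset.sort_eq]
      exact M.2.2
  invFun lam := ⟨(List.ofFn lam.1 : Multiset ℕ), by
    rw [Multiset.coe_card, List.length_ofFn], by
    rw [Multiset.sum_coe, List.sum_ofFn]; exact lam.2.2⟩
  left_inv M := by
    apply Subtype.ext
    show ((List.ofFn fun i : Fin k => (M.1.sort (· ≥ ·)).get _) : Multiset ℕ) = M.1
    rw [ofFn_get' (M.1.sort (· ≥ ·)) k (by rw [Multiset.length_sort, M.2.1]),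
      Multiset.sort_eq]
  right_inv lam := by
    apply Subtype.ext
    funext i
    show ((List.ofFn lam.1 : Multiset ℕ).sort (· ≥ ·)).get _ = lam.1 i
    have hsorted : List.Pairwise (· ≥ ·) (List.ofFn lam.1) := by
      rw [List.pairwise_iff_get]
      intro a b hab
      rw [List.get_ofFn, List.get_ofFn]
      exact lam.2.1 (by
        simp only [Fin.le_def, Fin.coe_cast]
        exact le_of_lt hab)
    have hperm : ((List.ofFn lam.1 : Multiset ℕ).sort (· ≥ ·)).Perm (List.ofFn lam.1) := by
      rw [← Multiset.coe_eq_coe, Multiset.sort_eq]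
    have heq : ((List.ofFn lam.1 : Multiset ℕ).sort (· ≥ ·)) = List.ofFn lam.1 :=
      List.Perm.eq_of_pairwise' (Multiset.pairwise_sort _ _) hsorted hperm
    rw [List.get_of_eq heq, List.get_ofFn]
    exact congrArg lam.1 (Fin.ext rfl)

section
variable {k : ℕ}

/-- the multiset attached to an admissible family -/
def admMul {κ : Fin k → ℕ} (i : (j : Fin k) → Fin (κ j) → ℕ) : Multiset ℕ :=
  ∑ j : Fin k, ∑ r : Fin (κ j), Multiset.replicate ((j : ℕ) + 1) (i j r)

lemma admMul_count {κ : Fin k → ℕ} (i : (j : Fin k) → Fin (κ j) → ℕ) (v : ℕ) :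
    (admMul i).count v = ∑ p : Σ j : Fin k, Fin (κ j),
      (if i p.1 p.2 = v then (p.1 : ℕ) + 1 else 0) := by
  unfold admMul
  rw [Multiset.count_sum']
  have h1 : ∀ j : Fin k,
      Multiset.count v (∑ r : Fin (κ j), Multiset.replicate ((j : ℕ) + 1) (i j r))
        = ∑ r : Fin (κ j), if i j r = v then (j : ℕ) + 1 else 0 := fun j => by
    rw [Multiset.count_sum']
    exact Finset.sum_congr rfl fun r _ => Multiset.count_replicate _ _ _
  rw [Finset.sum_congr rfl fun j _ => h1 j, Finset.sum_sigma', Finset.univ_sigma_univ]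

lemma admMul_count_apply {κ : Fin k → ℕ} (i : (j : Fin k) → Fin (κ j) → ℕ)
    (hinj : Function.Injective (fun p : Σ j : Fin k, Fin (κ j) => i p.1 p.2))
    (j : Fin k) (r : Fin (κ j)) :
    (admMul i).count (i j r) = (j : ℕ) + 1 := by
  rw [admMul_count i]
  rw [Finset.sum_eq_single (⟨j, r⟩ : Σ j : Fin k, Fin (κ j))]
  · rw [if_pos rfl]
  · intro p _ hp
    exact if_neg (fun h => hp (hinj h))
  · intro h
    exact absurd (Finset.mem_univ _) h

lemma admMul_mem {κ : Fin k → ℕ} (i : (j : Fin k) → Fin (κ j) → ℕ)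
    {v : ℕ} (hv : v ∈ admMul i) : ∃ j r, i j r = v := by
  by_contra h
  push_neg at h
  have hz : (admMul i).count v = 0 := by
    rw [admMul_count i]
    exact Finset.sum_eq_zero fun p _ => if_neg (h p.1 p.2)
  rw [← Multiset.count_pos] at hv
  omega

lemma admMul_filter_eq {κ : Fin k → ℕ} (i : (j : Fin k) → Fin (κ j) → ℕ)
    (hinj : Function.Injective (fun p : Σ j : Fin k, Fin (κ j) => i p.1 p.2))
    (j : Fin k) :
    (admMul i).toFinset.filter (fun v => (admMul i).count v = (j : ℕ) + 1)
      = Finset.image (i j) univ := by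
  ext v
  simp only [Finset.mem_filter, Multiset.mem_toFinset, Finset.mem_image, Finset.mem_univ,
    true_and]
  constructor
  · rintro ⟨hv, hcount⟩
    obtain ⟨j', r', rfl⟩ := admMul_mem i hv
    have h1 : (j' : ℕ) + 1 = (j : ℕ) + 1 := by
      rw [← hcount, admMul_count_apply i hinj]
    have hjj : j' = j := Fin.ext (by omega)
    subst hjj
    exact ⟨r', rfl⟩
  · rintro ⟨r, rfl⟩
    have hc := admMul_count_apply i hinj j r
    constructor
    · rw [← Multiset.count_pos, hc]; omega
    · exact hc

def cardAMH : Multiset ℕ →+ ℕ where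
  toFun := Multiset.card
  map_zero' := Multiset.card_zero
  map_add' := Multiset.card_add

lemma cardAMH_apply (M : Multiset ℕ) : cardAMH M = Multiset.card M := rfl

lemma admMul_card {κ : Fin k → ℕ} (i : (j : Fin k) → Fin (κ j) → ℕ) :
    Multiset.card (admMul i) = ∑ j : Fin k, ((j : ℕ) + 1) * κ j := by
  unfold admMul
  rw [← cardAMH_apply, map_sum cardAMH _ univ]
  refine Finset.sum_congr rfl fun j _ => ?_
  rw [map_sum cardAMH _ univ]
  simp only [cardAMH_apply, Multiset.card_replicate]
  rw [Finset.sum_const, Finset.card_univ, Fintype.card_fin, smul_eq_mul, mul_comm]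

lemma admMul_sum {κ : Fin k → ℕ} (i : (j : Fin k) → Fin (κ j) → ℕ) :
    (admMul i).sum = ∑ j : Fin k, ((j : ℕ) + 1) * ∑ r, i j r := by
  unfold admMul
  rw [Multiset.sum_sum]
  refine Finset.sum_congr rfl fun j _ => ?_
  rw [Multiset.sum_sum, Finset.mul_sum]
  refine Finset.sum_congr rfl fun r _ => ?_
  rw [Multiset.sum_replicate, smul_eq_mul]

def fibFn (k : ℕ) (hk : 1 ≤ k) (M : Multiset ℕ) (v : ℕ) : Fin k :=
  ⟨min (M.count v - 1) (k - 1), by omega⟩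

/-- partition of the support of a multiset of card k by count fibers -/
lemma count_fiber_sum {β : Type*} [AddCommMonoid β] (M : Multiset ℕ) (hk : 1 ≤ k)
    (hcard : Multiset.card M = k) (f : ℕ → β) :
    ∑ j : Fin k, ∑ v ∈ M.toFinset.filter (fun v => M.count v = (j : ℕ) + 1), f v
      = ∑ v ∈ M.toFinset, f v := by
  have hbd : ∀ v ∈ M.toFinset, 1 ≤ M.count v ∧ M.count v ≤ k := by
    intro v hv
    rw [Multiset.mem_toFinset] at hv
    exact ⟨Multiset.count_pos.mpr hv, hcard ▸ Multiset.count_le_card v M⟩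
  have hfib : ∀ j : Fin k, M.toFinset.filter (fun v => M.count v = (j : ℕ) + 1)
      = M.toFinset.filter (fun v =>
          fibFn k hk M v = j) := by
    intro j
    apply Finset.filter_congr
    intro v hv
    obtain ⟨h1, h2⟩ := hbd v hv
    have hj := j.isLt
    rw [Fin.ext_iff]
    simp only [fibFn, Fin.val_mk]
    constructor
    · intro h; omega
    · intro h; omega
  calc ∑ j : Fin k, ∑ v ∈ M.toFinset.filter (fun v => M.count v = (j : ℕ) + 1), f v
      = ∑ j : Fin k, ∑ v ∈ M.toFinset.filter (fun v =>
          fibFn k hk M v = j), f v :=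
        Finset.sum_congr rfl fun j _ => by rw [hfib j]
    _ = ∑ v ∈ M.toFinset, f v :=
        Finset.sum_fiberwise_of_maps_to (fun v _ => Finset.mem_univ _) f

lemma image_orderEmbOfFin (s : Finset ℕ) {m : ℕ} (h : s.card = m) :
    Finset.image (s.orderEmbOfFin h) univ = s := by
  ext v
  simp only [Finset.mem_image, Finset.mem_univ, true_and]
  constructor
  · rintro ⟨r, rfl⟩; exact Finset.orderEmbOfFin_mem s h r
  · intro hv
    have h2 : v ∈ Set.range (s.orderEmbOfFin h) := by
      rw [Finset.range_orderEmbOfFin]; exact hv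
    exact h2

lemma sum_orderEmbOfFin (s : Finset ℕ) {m : ℕ} (h : s.card = m) {β : Type*} [AddCommMonoid β]
    (f : ℕ → β) : ∑ r : Fin m, f (s.orderEmbOfFin h r) = ∑ v ∈ s, f v := by
  conv_rhs => rw [← image_orderEmbOfFin s h]
  rw [Finset.sum_image (fun x _ y _ hxy => (s.orderEmbOfFin h).injective hxy)]

end

lemma sum_Icc_fin {β : Type*} [AddCommMonoid β] (k : ℕ) (g : ℕ → β) :
    ∑ m ∈ Finset.Icc 1 k, g m = ∑ j : Fin k, g ((j : ℕ) + 1) := by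
  rw [← Finset.Ico_add_one_right_eq_Icc, Finset.sum_Ico_eq_sum_range]
  norm_num
  rw [Fin.sum_univ_eq_sum_range (fun j => g (j + 1)) k]
  exact Finset.sum_congr rfl fun m _ => by rw [add_comm]

noncomputable def mkFinsupp (n k : ℕ) (a : Fin k → ℕ) : ℕ →₀ ℕ :=
  Finsupp.onFinset (Finset.Icc 1 k)
    (fun m => if h : 1 ≤ m ∧ m ≤ k then m * n * a ⟨m - 1, by omega⟩ else 0)
    (fun m hm => by
      rw [Finset.mem_Icc]
      by_contra hmem
      exact hm (dif_neg hmem))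

lemma mkFinsupp_apply (n k : ℕ) (a : Fin k → ℕ) (m : ℕ) :
    mkFinsupp n k a m
      = if h : 1 ≤ m ∧ m ≤ k then m * n * a ⟨m - 1, by omega⟩ else 0 := rfl

lemma mkFinsupp_apply_fin (n k : ℕ) (a : Fin k → ℕ) (j : Fin k) :
    mkFinsupp n k a ((j : ℕ) + 1) = ((j : ℕ) + 1) * n * a j := by
  rw [mkFinsupp_apply, dif_pos ⟨by omega, by have := j.isLt; omega⟩]
  exact congrArg (fun x => ((j : ℕ) + 1) * n * a x) (Fin.ext (by simp only [Fin.val_mk]; omega))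

lemma mkFinsupp_sum (n k : ℕ) (a : Fin k → ℕ) :
    (Finset.Icc 1 k).sum ⇑(mkFinsupp n k a) = n * ∑ j : Fin k, ((j : ℕ) + 1) * a j := by
  rw [show (Finset.Icc 1 k).sum ⇑(mkFinsupp n k a)
    = ∑ m ∈ Finset.Icc 1 k, mkFinsupp n k a m from rfl]
  rw [sum_Icc_fin k (fun m => mkFinsupp n k a m), Finset.mul_sum]
  exact Finset.sum_congr rfl fun j _ => by rw [mkFinsupp_apply_fin]; ring

noncomputable def equivAL (n k N : ℕ) (hn : 1 ≤ n) :
    {a : Fin k → ℕ // n * ∑ j : Fin k, ((j : ℕ) + 1) * a j = N} ≃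
    {l : ℕ →₀ ℕ // l ∈ ((Finset.Icc 1 k).finsuppAntidiag N).filter
      (fun l => ∀ j ∈ Finset.Icc 1 k, (j * n) ∣ l j)} where
  toFun a := ⟨mkFinsupp n k a.1, by
    rw [Finset.mem_filter, Finset.mem_finsuppAntidiag]
    refine ⟨⟨by rw [mkFinsupp_sum]; exact a.2, Finsupp.support_onFinset_subset⟩, ?_⟩
    intro j hj
    rw [Finset.mem_Icc] at hj
    rw [mkFinsupp_apply, dif_pos ⟨hj.1, hj.2⟩]
    exact Dvd.intro _ rfl⟩
  invFun l := ⟨fun j => l.1 ((j : ℕ) + 1) / (((j : ℕ) + 1) * n), by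
    obtain ⟨hanti, hdvd⟩ := Finset.mem_filter.mp l.2
    obtain ⟨hsum, hsupp⟩ := Finset.mem_finsuppAntidiag.mp hanti
    have hdvd' : ∀ j : Fin k, (((j : ℕ) + 1) * n) ∣ l.1 ((j : ℕ) + 1) := fun j =>
      hdvd ((j : ℕ) + 1) (Finset.mem_Icc.mpr ⟨by omega, by have := j.isLt; omega⟩)
    calc n * ∑ j : Fin k, ((j : ℕ) + 1) * (l.1 ((j : ℕ) + 1) / (((j : ℕ) + 1) * n))
        = ∑ j : Fin k, l.1 ((j : ℕ) + 1) := by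
          rw [Finset.mul_sum]
          refine Finset.sum_congr rfl fun j _ => ?_
          rw [← mul_assoc, mul_comm n ((j : ℕ) + 1), Nat.mul_div_cancel' (hdvd' j)]
      _ = N := by rw [← sum_Icc_fin k l.1]; exact hsum⟩
  left_inv a := by
    apply Subtype.ext
    funext j
    show mkFinsupp n k a.1 ((j : ℕ) + 1) / (((j : ℕ) + 1) * n) = a.1 j
    rw [mkFinsupp_apply_fin, Nat.mul_div_cancel_left _
      (by have := j.isLt; positivity : 0 < ((j : ℕ) + 1) * n)]
  right_inv l := by
    apply Subtype.ext
    apply Finsupp.ext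
    intro m
    obtain ⟨hanti, hdvd⟩ := Finset.mem_filter.mp l.2
    obtain ⟨hsum, hsupp⟩ := Finset.mem_finsuppAntidiag.mp hanti
    show mkFinsupp n k _ m = l.1 m
    rw [mkFinsupp_apply]
    dsimp only
    by_cases h : 1 ≤ m ∧ m ≤ k
    · rw [dif_pos h]
      have h1 : ((⟨m - 1, by omega⟩ : Fin k) : ℕ) + 1 = m := by simp; omega
      rw [h1]
      exact Nat.mul_div_cancel' (hdvd m (Finset.mem_Icc.mpr h))
    · rw [dif_neg h]
      have hm : l.1 m = 0 := by
        by_contra hne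
        exact h (Finset.mem_Icc.mp (hsupp (Finsupp.mem_support_iff.mpr hne)))
      rw [hm]

def wpdF (n k N : ℕ) : WeightedPartitionData n k N →
    {M : Multiset ℕ // Multiset.card M = k ∧ n * M.sum = N}
  | ⟨⟨κ, hκ⟩, ⟨⟨i, hmono, hinj⟩, hw⟩⟩ =>
    ⟨admMul i, by rw [admMul_card]; exact hκ, by rw [admMul_sum]; exact hw⟩

theorem wpdF_bij (n k N : ℕ) (hk : 1 ≤ k) : Function.Bijective (wpdF n k N) := by
  constructor
  · intro x y hxy
    obtain ⟨⟨κ, hκ⟩, ⟨⟨i, hmono, hinj⟩, hw⟩⟩ := x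
    obtain ⟨⟨κ', hκ'⟩, ⟨⟨i', hmono', hinj'⟩, hw'⟩⟩ := y
    have hM : admMul i = admMul i' := congrArg Subtype.val hxy
    have hSj : ∀ j : Fin k, Finset.image (i j) univ = Finset.image (i' j) univ := by
      intro j
      rw [← admMul_filter_eq i hinj j, ← admMul_filter_eq i' hinj' j, hM]
    have hκeq : κ = κ' := by
      funext j
      have hcc := congrArg Finset.card (hSj j)
      rwa [Finset.card_image_of_injective _ (hmono j).injective,
        Finset.card_image_of_injective _ (hmono' j).injective,
        Finset.card_univ, Finset.card_univ, Fintype.card_fin, Fintype.card_fin] at hcc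
    subst hκeq
    have hieq : i = i' := by
      funext j
      have hcard : (Finset.image (i j) univ).card = κ j := by
        rw [Finset.card_image_of_injective _ (hmono j).injective, Finset.card_univ,
          Fintype.card_fin]
      have h1 := Finset.orderEmbOfFin_unique hcard
        (f := i j) (fun r => Finset.mem_image_of_mem _ (Finset.mem_univ r)) (hmono j)
      have h2 := Finset.orderEmbOfFin_unique hcard
        (f := i' j) (fun r => by rw [hSj j]; exact Finset.mem_image_of_mem _ (Finset.mem_univ r))
        (hmono' j)
      exact h1.trans h2.symm
    subst hieq
    rfl
  · rintro ⟨M, hcard, hsum⟩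
    classical
    set S : Fin k → Finset ℕ :=
      fun j => M.toFinset.filter (fun v => M.count v = (j : ℕ) + 1) with hS
    have hcount : ∀ j : Fin k, ∀ v ∈ S j, M.count v = (j : ℕ) + 1 := by
      intro j v hv
      rw [hS] at hv
      exact (Finset.mem_filter.mp hv).2
    set κ : Fin k → ℕ := fun j => (S j).card with hκdef
    set i : (j : Fin k) → Fin (κ j) → ℕ := fun j => ⇑((S j).orderEmbOfFin rfl) with hidef
    have hκ : ∑ j : Fin k, ((j : ℕ) + 1) * κ j = k := by
      have h1 : ∀ j : Fin k, ((j : ℕ) + 1) * κ j = ∑ v ∈ S j, M.count v := by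
        intro j
        rw [Finset.sum_congr rfl (hcount j), Finset.sum_const, smul_eq_mul, mul_comm]
      rw [Finset.sum_congr rfl (fun j _ => h1 j), count_fiber_sum M hk hcard,
        Multiset.toFinset_sum_count_eq, hcard]
    have hmono : ∀ j, StrictMono (i j) := fun j => ((S j).orderEmbOfFin rfl).strictMono
    have hmemS : ∀ j r, i j r ∈ S j := fun j r => Finset.orderEmbOfFin_mem _ _ _
    have hinj : Function.Injective (fun p : Σ j : Fin k, Fin (κ j) => i p.1 p.2) := by
      rintro ⟨j, r⟩ ⟨j', r'⟩ h
      simp only at h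
      have e1 : M.count (i j r) = (j : ℕ) + 1 := hcount j _ (hmemS j r)
      have e2 : M.count (i j' r') = (j' : ℕ) + 1 := hcount j' _ (hmemS j' r')
      rw [h] at e1
      have hjj : j = j' := Fin.ext (by omega)
      subst hjj
      have hrr : r = r' := ((S j).orderEmbOfFin rfl).injective h
      subst hrr
      rfl
    have hMsum : M.sum = ∑ v ∈ M.toFinset, M.count v * v := by
      conv_lhs => rw [← Multiset.toFinset_sum_count_nsmul_eq M]
      rw [Multiset.sum_sum]
      refine Finset.sum_congr rfl fun v _ => ?_
      rw [Multiset.nsmul_singleton, Multiset.sum_replicate, smul_eq_mul]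
    have hw : n * ∑ j : Fin k, ((j : ℕ) + 1) * ∑ r, i j r = N := by
      have h2 : ∀ j : Fin k, ((j : ℕ) + 1) * ∑ r, i j r = ∑ v ∈ S j, M.count v * v := by
        intro j
        have hsv : ∑ r, i j r = ∑ v ∈ S j, v := by
          rw [hidef]
          beta_reduce
          exact sum_orderEmbOfFin (S j) rfl (fun v => v)
        rw [hsv, Finset.mul_sum]
        refine Finset.sum_congr rfl fun v hv => ?_
        rw [hcount j v hv]
      rw [Finset.sum_congr rfl (fun j _ => h2 j), count_fiber_sum M hk hcard, ← hMsum]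
      exact hsum
    refine ⟨⟨⟨κ, hκ⟩, ⟨⟨i, hmono, hinj⟩, hw⟩⟩, ?_⟩
    apply Subtype.ext
    show admMul i = M
    unfold admMul
    have h3 : ∀ j : Fin k, ∑ r : Fin (κ j), Multiset.replicate ((j : ℕ) + 1) (i j r)
        = ∑ v ∈ S j, Multiset.replicate (M.count v) v := by
      intro j
      have hsv : ∑ r : Fin (κ j), Multiset.replicate ((j : ℕ) + 1) (i j r)
          = ∑ v ∈ S j, Multiset.replicate ((j : ℕ) + 1) v := by
        rw [hidef]
        beta_reduce
        exact sum_orderEmbOfFin (S j) rfl (fun v => Multiset.replicate ((j : ℕ) + 1) v)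
      rw [hsv]
      exact Finset.sum_congr rfl fun v hv => by rw [hcount j v hv]
    rw [Finset.sum_congr rfl (fun j _ => h3 j), count_fiber_sum M hk hcard]
    conv_rhs => rw [← Multiset.toFinset_sum_count_nsmul_eq M]
    exact Finset.sum_congr rfl fun v _ => (Multiset.nsmul_singleton _ _).symm


/-- For integers `n ≥ 1`, `k ≥ 1` and every `N ≥ 0`, the set of pairs
`((k_1,…,k_k), {i_r^{(j)}})` — where `Σ j·k_j = k`, `{i_r^{(j)}}` is an admissible
collection for `(k_1,…,k_k)`, and `n·Σ_j j·(i_1^{(j)}+…+i_{k_j}^{(j)}) = N` — is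
finite, and its cardinality equals the coefficient of `q^N` in
`∏_{j=1}^{k} (1 − q^{jn})⁻¹ ∈ ℤ[[q]]` (the inverse being `invOfUnit _ 1`, which makes
sense since each factor `1 − q^{jn}` has constant term `1`). -/

theorem count_weighted_admissible_collections (n k : ℕ) (hn : 1 ≤ n) (hk : 1 ≤ k) (N : ℕ) :
    Finite (WeightedPartitionData n k N) ∧
    (Nat.card (WeightedPartitionData n k N) : ℤ) =
      PowerSeries.coeff N
        (∏ j ∈ Finset.Icc 1 k,
          PowerSeries.invOfUnit (1 - (PowerSeries.X : PowerSeries ℤ) ^ (j * n)) 1) := by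
  have E : WeightedPartitionData n k N ≃
      {l : ℕ →₀ ℕ // l ∈ ((Finset.Icc 1 k).finsuppAntidiag N).filter
        (fun l => ∀ j ∈ Finset.Icc 1 k, (j * n) ∣ l j)} :=
    (Equiv.ofBijective (wpdF n k N) (wpdF_bij n k N hk)).trans
      ((equivMP n k N).trans ((equivPA n k N).symm.trans (equivAL n k N hn)))
  constructor
  · exact Finite.of_equiv _ E.symm
  · rw [coeff_prod_count n k N hn]
    have h1 : Nat.card (WeightedPartitionData n k N)
        = (((Finset.Icc 1 k).finsuppAntidiag N).filter
            (fun l => ∀ j ∈ Finset.Icc 1 k, (j * n) ∣ l j)).card := by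
      rw [Nat.card_congr E, Nat.card_eq_finsetCard]
    rw [h1]
end

section
/- In the polynomial ring ℤ[u,v], let e := 1 − u − v + uv and let c_2 ∈ ℤ[u,v] be the coefficient of T^2 in the formal power series (1 − uT)(1 − vT) / ((1 − T)(1 − uvT)) ∈ (ℤ[u,v])[[T]]. Then e² − c_2 = −u²v − uv² + u² + v² + 2uv − u − v. In particular, the homogeneous component of e² − c_2 of top degree (degree 3) is −u²v − uv², which is not of the form ℓ·(uv)^m for any nonnegative integer ℓ and m ≥ 0. -/
open MvPolynomial

/-- `u ∈ ℤ[u,v]`. -/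
noncomputable def uPoly : MvPolynomial (Fin 2) ℤ := MvPolynomial.X 0
/-- `v ∈ ℤ[u,v]`. -/
noncomputable def vPoly : MvPolynomial (Fin 2) ℤ := MvPolynomial.X 1

/-- The Hodge–Deligne polynomial `e = 1 − u − v + uv` of a smooth elliptic curve. -/
noncomputable def ePoly : MvPolynomial (Fin 2) ℤ := 1 - uPoly - vPoly + uPoly * vPoly

/-- `c₂`: the coefficient of `T²` in `(1 − uT)(1 − vT)/((1 − T)(1 − uvT))`, the division
being by the genuine inverse `invOfUnit _ 1` of `(1 − T)(1 − uvT)` in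
`(ℤ[u,v])[[T]]` (its constant term is `1`). -/
noncomputable def c2Poly : MvPolynomial (Fin 2) ℤ :=
  PowerSeries.coeff (R := MvPolynomial (Fin 2) ℤ) 2
    (((1 - PowerSeries.C (R := MvPolynomial (Fin 2) ℤ) uPoly * PowerSeries.X) *
        (1 - PowerSeries.C (R := MvPolynomial (Fin 2) ℤ) vPoly * PowerSeries.X)) *
      PowerSeries.invOfUnit
        ((1 - PowerSeries.X) *
          (1 - PowerSeries.C (R := MvPolynomial (Fin 2) ℤ) (uPoly * vPoly) * PowerSeries.X)) 1)

/- Auxiliary definitions and lemmas -/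

/-- shorthand for the base ring. -/
abbrev Ruv := MvPolynomial (Fin 2) ℤ

/-- The denominator `(1 − T)(1 − uvT)`. -/
noncomputable def Aden : PowerSeries Ruv :=
  (1 - PowerSeries.X) * (1 - PowerSeries.C (R := Ruv) (uPoly * vPoly) * PowerSeries.X)

/-- Its inverse. -/
noncomputable def Binv : PowerSeries Ruv := PowerSeries.invOfUnit Aden 1

lemma hAB : Aden * Binv = 1 := PowerSeries.mul_invOfUnit Aden 1 (by simp [Aden])

lemma hAeq : Aden = 1 - PowerSeries.C (R := Ruv) (1 + uPoly * vPoly) * PowerSeries.X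
    + PowerSeries.C (R := Ruv) (uPoly * vPoly) * PowerSeries.X ^ 2 := by
  simp [Aden, map_add, map_one]
  ring

lemma coeffA0 : PowerSeries.coeff (R := Ruv) 0 Aden = 1 := by simp [hAeq]
lemma coeffA1 : PowerSeries.coeff (R := Ruv) 1 Aden = -(1 + uPoly * vPoly) := by
  simp [hAeq, PowerSeries.coeff_X_pow, mul_assoc, PowerSeries.coeff_C_mul]
lemma coeffA2 : PowerSeries.coeff (R := Ruv) 2 Aden = uPoly * vPoly := by
  simp [hAeq, PowerSeries.coeff_X_pow, PowerSeries.coeff_one, mul_assoc,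
    PowerSeries.coeff_C_mul]

lemma anti1 : Finset.HasAntidiagonal.antidiagonal 1 = ({(0,1),(1,0)} : Finset (ℕ × ℕ)) := by decide
lemma anti2 : Finset.HasAntidiagonal.antidiagonal 2 = ({(0,2),(1,1),(2,0)} : Finset (ℕ × ℕ)) := by decide

lemma coeffB0 : PowerSeries.coeff (R := Ruv) 0 Binv = 1 := by
  have h := congrArg (PowerSeries.coeff (R := Ruv) 0) hAB
  rw [PowerSeries.coeff_mul] at h
  simpa [coeffA0] using h

lemma coeffB1 : PowerSeries.coeff (R := Ruv) 1 Binv = 1 + uPoly * vPoly := by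
  have h := congrArg (PowerSeries.coeff (R := Ruv) 1) hAB
  rw [PowerSeries.coeff_mul, anti1, Finset.sum_insert (by decide),
    Finset.sum_singleton] at h
  simp [coeffA0, coeffA1, coeffB0, PowerSeries.coeff_one] at h
  linear_combination h

lemma coeffB2 : PowerSeries.coeff (R := Ruv) 2 Binv = 1 + uPoly * vPoly + (uPoly * vPoly) ^ 2 := by
  have h := congrArg (PowerSeries.coeff (R := Ruv) 2) hAB
  rw [PowerSeries.coeff_mul, anti2, Finset.sum_insert (by decide),
    Finset.sum_insert (by decide), Finset.sum_singleton] at h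
  simp [coeffA0, coeffA1, coeffA2, coeffB0, coeffB1, PowerSeries.coeff_one] at h
  linear_combination h

/-- The numerator. -/
noncomputable def Nnum : PowerSeries Ruv :=
  (1 - PowerSeries.C (R := Ruv) uPoly * PowerSeries.X) *
    (1 - PowerSeries.C (R := Ruv) vPoly * PowerSeries.X)

lemma hNeq : Nnum = 1 - PowerSeries.C (R := Ruv) (uPoly + vPoly) * PowerSeries.X
    + PowerSeries.C (R := Ruv) (uPoly * vPoly) * PowerSeries.X ^ 2 := by
  simp [Nnum, map_add]
  ring

lemma coeffN0 : PowerSeries.coeff (R := Ruv) 0 Nnum = 1 := by simp [hNeq]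
lemma coeffN1 : PowerSeries.coeff (R := Ruv) 1 Nnum = -(uPoly + vPoly) := by
  simp [hNeq, PowerSeries.coeff_X_pow, mul_assoc, PowerSeries.coeff_C_mul]
lemma coeffN2 : PowerSeries.coeff (R := Ruv) 2 Nnum = uPoly * vPoly := by
  simp [hNeq, PowerSeries.coeff_X_pow, PowerSeries.coeff_one, mul_assoc,
    PowerSeries.coeff_C_mul]

lemma c2Poly_eq : c2Poly =
    1 + 2 * (uPoly * vPoly) + (uPoly * vPoly) ^ 2 - uPoly - vPoly
      - uPoly ^ 2 * vPoly - uPoly * vPoly ^ 2 := by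
  have : c2Poly = PowerSeries.coeff (R := Ruv) 2 (Nnum * Binv) := rfl
  rw [this, PowerSeries.coeff_mul, anti2, Finset.sum_insert (by decide),
    Finset.sum_insert (by decide), Finset.sum_singleton]
  simp only [coeffN0, coeffN1, coeffN2, coeffB0, coeffB1, coeffB2]
  ring

lemma main_eq : ePoly ^ 2 - c2Poly =
    -uPoly ^ 2 * vPoly - uPoly * vPoly ^ 2 + uPoly ^ 2 + vPoly ^ 2 +
      2 * uPoly * vPoly - uPoly - vPoly := by
  rw [c2Poly_eq, ePoly]
  ring

lemma top_homogeneous :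
    (-uPoly ^ 2 * vPoly - uPoly * vPoly ^ 2).IsHomogeneous 3 := by
  have h1 : (-uPoly ^ 2 * vPoly).IsHomogeneous 3 := by
    have := ((isHomogeneous_X ℤ (0 : Fin 2)).pow 2).mul (isHomogeneous_X ℤ (1 : Fin 2))
    simpa [uPoly, vPoly, neg_mul] using this.neg
  have h2 : (uPoly * vPoly ^ 2).IsHomogeneous 3 := by
    have := (isHomogeneous_X ℤ (0 : Fin 2)).mul ((isHomogeneous_X ℤ (1 : Fin 2)).pow 2)
    simpa [uPoly, vPoly] using this
  simpa [sub_eq_add_neg] using h1.add h2.neg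

lemma low_degree :
    (uPoly ^ 2 + vPoly ^ 2 + 2 * uPoly * vPoly - uPoly - vPoly).totalDegree < 3 := by
  have hu : uPoly.totalDegree ≤ 1 := by simp [uPoly]
  have hv : vPoly.totalDegree ≤ 1 := by simp [vPoly]
  have key : uPoly ^ 2 + vPoly ^ 2 + 2 * uPoly * vPoly - uPoly - vPoly
      = (uPoly + vPoly) ^ 2 - (uPoly + vPoly) := by ring
  rw [key]
  have hs : (uPoly + vPoly).totalDegree ≤ 1 :=
    (totalDegree_add _ _).trans (by simp [hu, hv])
  have hp : ((uPoly + vPoly) ^ 2).totalDegree ≤ 2 :=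
    (totalDegree_pow _ _).trans (by omega)
  calc ((uPoly + vPoly) ^ 2 - (uPoly + vPoly)).totalDegree
      ≤ max ((uPoly + vPoly) ^ 2).totalDegree (uPoly + vPoly).totalDegree := by
        rw [sub_eq_add_neg]
        exact (totalDegree_add _ _).trans (by rw [totalDegree_neg])
    _ < 3 := by omega

/-- In `ℤ[u,v]`, with `e = 1 − u − v + uv` and `c₂` the coefficient of
`T²` in `(1 − uT)(1 − vT)/((1 − T)(1 − uvT))`, one has
`e² − c₂ = −u²v − uv² + u² + v² + 2uv − u − v`; the homogeneous component of top
degree (degree `3`) of `e² − c₂` is `−u²v − uv²`, which is not of the form `ℓ(uv)^m`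
for any nonnegative integers `ℓ` and `m`. -/
theorem opposite_power_structure_not_effective :
    ePoly ^ 2 - c2Poly =
      -uPoly ^ 2 * vPoly - uPoly * vPoly ^ 2 + uPoly ^ 2 + vPoly ^ 2 +
        2 * uPoly * vPoly - uPoly - vPoly ∧
    MvPolynomial.homogeneousComponent 3 (ePoly ^ 2 - c2Poly) =
      -uPoly ^ 2 * vPoly - uPoly * vPoly ^ 2 ∧
    ∀ ℓ m : ℕ,
      -uPoly ^ 2 * vPoly - uPoly * vPoly ^ 2 ≠
        (ℓ : MvPolynomial (Fin 2) ℤ) * (uPoly * vPoly) ^ m := by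
  refine ⟨main_eq, ?_, ?_⟩
  · rw [main_eq]
    have hsplit : -uPoly ^ 2 * vPoly - uPoly * vPoly ^ 2 + uPoly ^ 2 + vPoly ^ 2 +
        2 * uPoly * vPoly - uPoly - vPoly
        = (-uPoly ^ 2 * vPoly - uPoly * vPoly ^ 2) +
          (uPoly ^ 2 + vPoly ^ 2 + 2 * uPoly * vPoly - uPoly - vPoly) := by ring
    have hm : (-uPoly ^ 2 * vPoly - uPoly * vPoly ^ 2) ∈
        homogeneousSubmodule (Fin 2) ℤ 3 :=
      (mem_homogeneousSubmodule _ _).mpr top_homogeneous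
    rw [hsplit, map_add, homogeneousComponent_of_mem hm, if_pos rfl,
      homogeneousComponent_eq_zero _ _ low_degree, add_zero]
  · intro ℓ m h
    have := congrArg (MvPolynomial.eval (fun _ => (1 : ℤ))) h
    simp [uPoly, vPoly] at this
end
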